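/- arXiv:1207.5433 — 3 statements merged into one kernel-verified Lean document; each statement's English description precedes it below -/
import Mathlib

section
/- Let d > 1, k coprime to d, and a_1,…,a_N integers with 0 < a_i < d; set μ_i(k) = frac(k·a_i/d). If κ_{ij} := (1 - μ_i(1) - μ_j(1))^{-1} is a (nonzero) integer, then κ_{ij} · (1 - μ_i(k) - μ_j(k)) is an integer. Moreover, if a_i = a_j, κ_{ij} ∈ (1/2)ℤ and k is odd, then again κ_{ij}·(1-μ_i(k)-μ_j(k)) ∈ ℤ. -/
/-!
Write `s = d - a - b`, so that `κ = d / s`. Since `frac(k a / d) = (k a mod d) / d`, the product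
`κ (1 - μ_a(k) - μ_b(k))` equals `(d - (k a mod d) - (k b mod d)) / s`, and it suffices that `s`
divides this numerator. If `κ ∈ ℤ`, then `s ∣ d`, so reducing mod `d` is harmless mod `s`, and
`d - k a - k b = k s - (k - 1) d`. If `a = b` and `2κ ∈ ℤ`, then `s ∣ 2d`, which controls
`2 (k a mod d)` mod `s`, and for odd `k` the term `(k - 1) d` is a multiple of `2d`.
-/

namespace Int

theorem sub_sub_dvd_sub_mul_emod_sub_mul_emod {d a b : ℤ} (k : ℤ) (h : d - a - b ∣ d) :
    d - a - b ∣ d - k * a % d - k * b % d := by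
  rw [show d - k * a % d - k * b % d =
      k * (d - a - b) - (k - 1) * d + (k * a - k * a % d) + (k * b - k * b % d) by ring]
  exact (((dvd_mul_left _ k).sub (h.mul_left _)).add (h.trans dvd_self_sub_emod)).add
    (h.trans dvd_self_sub_emod)

theorem sub_sub_dvd_sub_mul_emod_sub_mul_emod_of_odd {d a k : ℤ} (hk : Odd k)
    (h : d - a - a ∣ 2 * d) : d - a - a ∣ d - k * a % d - k * a % d := by
  obtain ⟨t, rfl⟩ := hk
  rw [show d - (2 * t + 1) * a % d - (2 * t + 1) * a % d =
      (2 * t + 1) * (d - a - a) - t * (2 * d) +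
        2 * ((2 * t + 1) * a - (2 * t + 1) * a % d) by ring]
  exact ((dvd_mul_left _ _).sub (h.mul_left t)).add
    (h.trans (mul_dvd_mul_left 2 dvd_self_sub_emod))

theorem dvd_of_cast_div_eq {K : Type*} [Field K] [CharZero K] {n s m : ℤ} (hs : s ≠ 0)
    (h : (n : K) / s = m) : s ∣ n :=
  ⟨m, by rw [div_eq_iff (cast_ne_zero.mpr hs)] at h; exact_mod_cast h.trans (mul_comm _ _)⟩

end Int

section FloorRing

variable {K : Type*} [Field K] [LinearOrder K] [IsStrictOrderedRing K] [FloorRing K]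

theorem inv_one_sub_div_sub_div_mul_one_sub_fract_sub_fract {d : ℕ} (hd : d ≠ 0) (a b : K)
    (x y : ℤ) :
    (1 - a / d - b / d)⁻¹ * (1 - Int.fract ((x : K) / d) - Int.fract ((y : K) / d)) =
      ((d - x % d - y % d : ℤ) : K) / (d - a - b) := by
  have hd' : (d : K) ≠ 0 := Nat.cast_ne_zero.mpr hd
  have hκ : (1 : K) - a / d - b / d = (d - a - b) / d := by field_simp
  have hμ : (1 : K) - Int.fract ((x : K) / d) - Int.fract ((y : K) / d) =
      ((d - x % d - y % d : ℤ) : K) / d := by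
    rw [Int.fract_div_intCast_eq_div_intCast_mod, Int.fract_div_intCast_eq_div_intCast_mod]
    push_cast
    field_simp
  rw [hκ, hμ, inv_div, mul_comm, div_mul_div_cancel₀ hd']

end FloorRing

theorem kappa_mul_one_sub_mu_isInt_general (d k : ℕ) (hd : 1 < d)
    (a b : ℕ)
    (hne : (a : ℚ) / d + (b : ℚ) / d ≠ 1)
    (h : (∃ m : ℤ, ((1 : ℚ) - (a : ℚ) / d - (b : ℚ) / d)⁻¹ = m) ∨
      (a = b ∧ (∃ m : ℤ, 2 * ((1 : ℚ) - (a : ℚ) / d - (b : ℚ) / d)⁻¹ = m) ∧ Odd k)) :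
    ∃ m : ℤ, ((1 : ℚ) - (a : ℚ) / d - (b : ℚ) / d)⁻¹ *
        (1 - Int.fract (((k : ℚ) * a) / d) - Int.fract (((k : ℚ) * b) / d)) = m := by
  set s : ℤ := d - a - b with hs_def
  have hsQ : (s : ℚ) = d - a - b := by push_cast [hs_def]; rfl
  have hs : s ≠ 0 := by
    rintro hs0
    apply hne
    rw [← add_div, div_eq_one_iff_eq (by positivity)]
    exact_mod_cast (by omega : (a : ℤ) + b = d)
  have hκ : ((1 : ℚ) - a / d - b / d)⁻¹ = ((d : ℤ) : ℚ) / s := by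
    rw [hsQ, Int.cast_natCast]; field_simp
  have hdvd : s ∣ d - k * a % d - k * b % d := by
    rcases h with ⟨m, hm⟩ | ⟨rfl, ⟨m, hm⟩, hk⟩
    · rw [hκ] at hm
      exact Int.sub_sub_dvd_sub_mul_emod_sub_mul_emod k (Int.dvd_of_cast_div_eq hs hm)
    · rw [hκ, ← mul_div_assoc] at hm
      have h2d : s ∣ 2 * d :=
        Int.dvd_of_cast_div_eq (K := ℚ) hs (m := m) (by push_cast; exact hm)
      exact Int.sub_sub_dvd_sub_mul_emod_sub_mul_emod_of_odd (by exact_mod_cast hk) h2d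
  obtain ⟨c, hc⟩ := hdvd
  have hcast (x : ℕ) : (k : ℚ) * x = ((k * x : ℤ) : ℚ) := by push_cast; rfl
  refine ⟨c, ?_⟩
  rw [hcast, hcast, inv_one_sub_div_sub_div_mul_one_sub_fract_sub_fract (by omega), hc,
    Int.cast_mul, ← hsQ, mul_div_cancel_left₀ _ (Int.cast_ne_zero.mpr hs)]

/-- **Lemma (branch orders, part b).**
Let `d > 1`, `k` coprime to `d`, `0 < a, b < d`, and `μ_i(k) = frac(k·a_i/d)`
(so `μ_i(1) = a_i/d`); assume `μ_a(1) + μ_b(1) ≠ 1` so that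
`κ_{ab} = (1 - a/d - b/d)⁻¹` is defined. If `κ_{ab} ∈ ℤ`, or if `a = b`,
`κ_{ab} ∈ ½ℤ` and `k` is odd, then `κ_{ab}·(1 - μ_a(k) - μ_b(k)) ∈ ℤ`. -/
theorem kappa_mul_one_sub_mu_isInt (d k : ℕ) (hd : 1 < d) (hk : Nat.Coprime k d)
    (a b : ℕ) (ha : 0 < a) (ha' : a < d) (hb : 0 < b) (hb' : b < d)
    (hne : (a : ℚ) / d + (b : ℚ) / d ≠ 1)
    (h : (∃ m : ℤ, ((1 : ℚ) - (a : ℚ) / d - (b : ℚ) / d)⁻¹ = m) ∨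
      (a = b ∧ (∃ m : ℤ, 2 * ((1 : ℚ) - (a : ℚ) / d - (b : ℚ) / d)⁻¹ = m) ∧ Odd k)) :
    ∃ m : ℤ, ((1 : ℚ) - (a : ℚ) / d - (b : ℚ) / d)⁻¹ *
        (1 - Int.fract (((k : ℚ) * a) / d) - Int.fract (((k : ℚ) * b) / d)) = m :=
  kappa_mul_one_sub_mu_isInt_general d k hd a b hne h
end

section
/- Consider the flow on B^n × ℂ^{n+1} obtained by lifting the unit-speed geodesic flow starting at (0, e_1/√(2κ)) to the trivial local system, with fiberwise norm ‖x‖_z^2 = -2⟨x,x⟩_{1,n} + 4|⟨x, (1,z)⟩_{1,n}|²/⟨(1,z),(1,z)⟩_{1,n}. For x = (x_1,…,x_{n+1}) in the fiber over the origin, the norm along the geodesic z_t = tanh(t/√(2κ))e_1 satisfies ‖x‖_{z_t}^2 = -2⟨x,x⟩_{1,n} + 4|x_1 cosh(t/√(2κ)) - x_2 sinh(t/√(2κ))|². Consequently the Lyapunov exponents of this cocycle are 1/√(2κ) and -1/√(2κ), each with multiplicity 2, and 0 with multiplicity 2n-2. -/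
open scoped BigOperators
open Filter

noncomputable section

/-- The standard Hermitian form `⟨W,Z⟩_{1,n} = W₀Z̄₀ - ∑_{i=1}^n W_iZ̄_i` of
signature `(1,n)` on `ℂ^{n+1}`. -/
def hform (n : ℕ) (v w : Fin (n + 1) → ℂ) : ℂ :=
  v 0 * (starRingEnd ℂ) (w 0) - ∑ i : Fin n, v i.succ * (starRingEnd ℂ) (w i.succ)

/-- The point `(1, z_t)` with `z_t = tanh(t/√(2κ))·e₁` on the unit speed
geodesic through the origin, in homogeneous coordinates. -/
def geodesicPt (n : ℕ) (κ t : ℝ) : Fin (n + 1) → ℂ := fun i =>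
  if i = 0 then 1
  else if (i : ℕ) = 1 then ((Real.tanh (t / Real.sqrt (2 * κ)) : ℝ) : ℂ) else 0

/-- The fiberwise Hodge norm squared
`‖x‖_z² = -2⟨x,x⟩_{1,n} + 4|⟨x,(1,z)⟩_{1,n}|²/⟨(1,z),(1,z)⟩_{1,n}`
along the geodesic `z_t`. -/
def hodgeNormSq (n : ℕ) (κ t : ℝ) (x : Fin (n + 1) → ℂ) : ℝ :=
  -2 * (hform n x x).re +
    4 * ‖hform n x (geodesicPt n κ t)‖ ^ 2 /
      (hform n (geodesicPt n κ t) (geodesicPt n κ t)).re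

/-! Write `u = t/√(2κ)`. Along the geodesic `⟨(1,z_t),(1,z_t)⟩ = 1 - tanh² u = 1/cosh² u`,
so the factor `cosh u` turns `⟨x,(1,z_t)⟩ = x₁ - x₂ tanh u` into `x₁ cosh u - x₂ sinh u`.
When `x₂ = ∓x₁` and the remaining coordinates vanish, `x` is isotropic and this is `x₁ e^{±u}`,
so `‖x‖_{z_t} = 2|x₁| e^{±u}`; when `x₁ = x₂ = 0` the norm does not depend on `t` at all. -/

lemma hform_succ (m : ℕ) (v w : Fin (m + 2) → ℂ) :
    hform (m + 1) v w = v 0 * starRingEnd ℂ (w 0) - v 1 * starRingEnd ℂ (w 1) -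
      ∑ i : Fin m, v i.succ.succ * starRingEnd ℂ (w i.succ.succ) := by
  rw [hform, Fin.sum_univ_succ, Fin.succ_zero_eq_one, sub_add_eq_sub_sub]

lemma hform_self_of_tail_eq_zero (m : ℕ) (x : Fin (m + 2) → ℂ)
    (htail : ∀ i : Fin (m + 2), 2 ≤ (i : ℕ) → x i = 0) :
    hform (m + 1) x x = x 0 * starRingEnd ℂ (x 0) - x 1 * starRingEnd ℂ (x 1) := by
  have hsucc : ∀ i : Fin m, x i.succ.succ = 0 := fun i => htail _ (by simp)
  simp [hform_succ, hsucc]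

lemma eq_zero_of_tail_eq_zero (m : ℕ) (x : Fin (m + 2) → ℂ) (h0 : x 0 = 0) (h1 : x 1 = 0)
    (htail : ∀ i : Fin (m + 2), 2 ≤ (i : ℕ) → x i = 0) : x = 0 := by
  funext i
  induction i using Fin.cases with
  | zero => exact h0
  | succ j =>
    induction j using Fin.cases with
    | zero => exact h1
    | succ k => exact htail _ (by simp)

lemma mul_cosh_sub_mul_sinh_eq (a b : ℂ) (u : ℝ) :
    a * ((Real.cosh u : ℝ) : ℂ) - b * ((Real.sinh u : ℝ) : ℂ) =
      (a - b * ((Real.tanh u : ℝ) : ℂ)) * ((Real.cosh u : ℝ) : ℂ) := by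
  rw [sub_mul, mul_assoc, ← Complex.ofReal_mul, Real.tanh_eq_sinh_div_cosh,
    div_mul_cancel₀ _ (Real.cosh_pos u).ne']

section geodesic

variable (m : ℕ) (κ t : ℝ)

@[simp]
lemma geodesicPt_zero : geodesicPt (m + 1) κ t 0 = 1 := by
  simp [geodesicPt]

@[simp]
lemma geodesicPt_one :
    geodesicPt (m + 1) κ t 1 = ((Real.tanh (t / Real.sqrt (2 * κ)) : ℝ) : ℂ) := by
  simp [geodesicPt]

@[simp]
lemma geodesicPt_succ_succ (i : Fin m) : geodesicPt (m + 1) κ t i.succ.succ = 0 := by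
  simp [geodesicPt, Fin.succ_ne_zero]

lemma hform_geodesicPt (x : Fin (m + 2) → ℂ) :
    hform (m + 1) x (geodesicPt (m + 1) κ t) =
      x 0 - x 1 * ((Real.tanh (t / Real.sqrt (2 * κ)) : ℝ) : ℂ) := by
  simp only [hform_succ, geodesicPt_zero, geodesicPt_one, geodesicPt_succ_succ, map_one,
    map_zero, Complex.conj_ofReal, mul_one, mul_zero, Finset.sum_const_zero, sub_zero]

lemma hform_geodesicPt_self :
    (hform (m + 1) (geodesicPt (m + 1) κ t) (geodesicPt (m + 1) κ t)).re =
      1 / Real.cosh (t / Real.sqrt (2 * κ)) ^ 2 := by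
  have hc := (Real.cosh_pos (t / Real.sqrt (2 * κ))).ne'
  rw [hform_geodesicPt, geodesicPt_zero, geodesicPt_one, ← Complex.ofReal_mul,
    ← Complex.ofReal_one, ← Complex.ofReal_sub, Complex.ofReal_re, Real.tanh_eq_sinh_div_cosh]
  field_simp
  linarith [Real.cosh_sq_sub_sinh_sq (t / Real.sqrt (2 * κ))]

theorem hodgeNormSq_eq (x : Fin (m + 2) → ℂ) :
    hodgeNormSq (m + 1) κ t x =
      -2 * (hform (m + 1) x x).re +
        4 * ‖x 0 * ((Real.cosh (t / Real.sqrt (2 * κ)) : ℝ) : ℂ) -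
            x 1 * ((Real.sinh (t / Real.sqrt (2 * κ)) : ℝ) : ℂ)‖ ^ 2 := by
  rw [hodgeNormSq, hform_geodesicPt, hform_geodesicPt_self, mul_cosh_sub_mul_sinh_eq, norm_mul,
    Complex.norm_real, Real.norm_of_nonneg (Real.cosh_pos _).le]
  field_simp

end geodesic

lemma sqrt_hodgeNormSq_of_isotropic (m : ℕ) (κ t : ℝ) (x : Fin (m + 2) → ℂ)
    (hiso : hform (m + 1) x x = 0) :
    Real.sqrt (hodgeNormSq (m + 1) κ t x) =
      2 * ‖x 0 * ((Real.cosh (t / Real.sqrt (2 * κ)) : ℝ) : ℂ) -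
            x 1 * ((Real.sinh (t / Real.sqrt (2 * κ)) : ℝ) : ℂ)‖ := by
  rw [hodgeNormSq_eq, hiso, Complex.zero_re, mul_zero, zero_add, show (4 : ℝ) = 2 ^ 2
    by norm_num, ← mul_pow, Real.sqrt_sq (by positivity)]

lemma norm_mul_cosh_sub_neg_mul_sinh (a : ℂ) (u : ℝ) :
    ‖a * ((Real.cosh u : ℝ) : ℂ) - -a * ((Real.sinh u : ℝ) : ℂ)‖ = ‖a‖ * Real.exp u := by
  rw [neg_mul, sub_neg_eq_add, ← mul_add, ← Complex.ofReal_add, Real.cosh_add_sinh, norm_mul,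
    Complex.norm_real, Real.norm_of_nonneg (Real.exp_pos u).le]

lemma norm_mul_cosh_sub_mul_sinh (a : ℂ) (u : ℝ) :
    ‖a * ((Real.cosh u : ℝ) : ℂ) - a * ((Real.sinh u : ℝ) : ℂ)‖ = ‖a‖ * Real.exp (-u) := by
  rw [← mul_sub, ← Complex.ofReal_sub, Real.cosh_sub_sinh, norm_mul, Complex.norm_real,
    Real.norm_of_nonneg (Real.exp_pos _).le]

lemma tendsto_log_mul_exp_div (C c : ℝ) (hC : C ≠ 0) :
    Tendsto (fun t => Real.log (C * Real.exp (t * c)) / t) atTop (nhds c) := by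
  have hlin : Tendsto (fun t : ℝ => Real.log C / t + c) atTop (nhds (0 + c)) :=
    (tendsto_const_nhds.div_atTop tendsto_id).add tendsto_const_nhds
  rw [zero_add] at hlin
  refine hlin.congr' ?_
  filter_upwards [eventually_ne_atTop 0] with t ht
  rw [Real.log_mul hC (Real.exp_ne_zero _), Real.log_exp]
  field_simp

theorem uniformizing_lyapunov_spectrum_general (n : ℕ) (hn : 1 ≤ n) (κ : ℝ) :
    (∀ (t : ℝ) (x : Fin (n + 1) → ℂ),
        hodgeNormSq n κ t x =
          -2 * (hform n x x).re +
            4 * ‖x 0 * ((Real.cosh (t / Real.sqrt (2 * κ)) : ℝ) : ℂ) -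
                x 1 * ((Real.sinh (t / Real.sqrt (2 * κ)) : ℝ) : ℂ)‖ ^ 2) ∧
    (∀ x : Fin (n + 1) → ℂ, x ≠ 0 → x 1 = -x 0 →
        (∀ i : Fin (n + 1), 2 ≤ (i : ℕ) → x i = 0) →
        Tendsto (fun t => Real.log (Real.sqrt (hodgeNormSq n κ t x)) / t) atTop
          (nhds (1 / Real.sqrt (2 * κ)))) ∧
    (∀ x : Fin (n + 1) → ℂ, x ≠ 0 → x 0 = 0 → x 1 = 0 →
        Tendsto (fun t => Real.log (Real.sqrt (hodgeNormSq n κ t x)) / t) atTop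
          (nhds 0)) ∧
    (∀ x : Fin (n + 1) → ℂ, x ≠ 0 → x 1 = x 0 →
        (∀ i : Fin (n + 1), 2 ≤ (i : ℕ) → x i = 0) →
        Tendsto (fun t => Real.log (Real.sqrt (hodgeNormSq n κ t x)) / t) atTop
          (nhds (-(1 / Real.sqrt (2 * κ))))) := by
  obtain ⟨m, rfl⟩ : ∃ m, n = m + 1 := ⟨n - 1, by omega⟩
  refine ⟨hodgeNormSq_eq m κ, ?_, ?_, ?_⟩
  · intro x hx hx1 htail
    have hx0 : x 0 ≠ 0 := fun h0 =>
      hx (eq_zero_of_tail_eq_zero m x h0 (by rw [hx1, h0, neg_zero]) htail)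
    have hiso : hform (m + 1) x x = 0 := by
      rw [hform_self_of_tail_eq_zero m x htail, hx1, map_neg, neg_mul_neg, sub_self]
    refine (tendsto_log_mul_exp_div (2 * ‖x 0‖) _ (by positivity)).congr fun t => ?_
    rw [sqrt_hodgeNormSq_of_isotropic m κ t x hiso, hx1, norm_mul_cosh_sub_neg_mul_sinh,
      mul_one_div, mul_assoc]
  · intro x _ h0 h1
    have hconst : ∀ t, hodgeNormSq (m + 1) κ t x = -2 * (hform (m + 1) x x).re := fun t => by
      simp [hodgeNormSq_eq, h0, h1]
    simpa only [hconst, id_eq] using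
      (tendsto_const_nhds (x := Real.log (Real.sqrt (-2 * (hform (m + 1) x x).re)))).div_atTop
        tendsto_id
  · intro x hx hx1 htail
    have hx0 : x 0 ≠ 0 := fun h0 => hx (eq_zero_of_tail_eq_zero m x h0 (hx1.trans h0) htail)
    have hiso : hform (m + 1) x x = 0 := by
      rw [hform_self_of_tail_eq_zero m x htail, hx1, sub_self]
    refine (tendsto_log_mul_exp_div (2 * ‖x 0‖) _ (by positivity)).congr fun t => ?_
    rw [sqrt_hodgeNormSq_of_isotropic m κ t x hiso, hx1, norm_mul_cosh_sub_mul_sinh, mul_neg,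
      mul_one_div, mul_assoc]

/-- **Lyapunov exponents of the uniformizing cocycle.**
For `x` in the fiber over the origin, the norm along the geodesic
`z_t = tanh(t/√(2κ))e₁` satisfies
`‖x‖_{z_t}² = -2⟨x,x⟩_{1,n} + 4|x₁cosh(t/√(2κ)) - x₂sinh(t/√(2κ))|²`,
and consequently the Lyapunov exponents of this cocycle are `1/√(2κ)` and
`-1/√(2κ)` each with multiplicity `2` (realized on the real 2-dimensional
spaces `V^{±λ₁} = {x : x₂ = ∓x₁, x_i = 0 (i ≥ 3)}`) and `0` with multiplicity
`2n-2` (realized on `V⁰ = {x : x₁ = x₂ = 0}`). -/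
theorem uniformizing_lyapunov_spectrum (n : ℕ) (hn : 1 ≤ n) (κ : ℝ) (hκ : 0 < κ) :
    (∀ (t : ℝ) (x : Fin (n + 1) → ℂ),
        hodgeNormSq n κ t x =
          -2 * (hform n x x).re +
            4 * ‖x 0 * ((Real.cosh (t / Real.sqrt (2 * κ)) : ℝ) : ℂ) -
                x 1 * ((Real.sinh (t / Real.sqrt (2 * κ)) : ℝ) : ℂ)‖ ^ 2) ∧
    (∀ x : Fin (n + 1) → ℂ, x ≠ 0 → x 1 = -x 0 →
        (∀ i : Fin (n + 1), 2 ≤ (i : ℕ) → x i = 0) →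
        Tendsto (fun t => Real.log (Real.sqrt (hodgeNormSq n κ t x)) / t) atTop
          (nhds (1 / Real.sqrt (2 * κ)))) ∧
    (∀ x : Fin (n + 1) → ℂ, x ≠ 0 → x 0 = 0 → x 1 = 0 →
        Tendsto (fun t => Real.log (Real.sqrt (hodgeNormSq n κ t x)) / t) atTop
          (nhds 0)) ∧
    (∀ x : Fin (n + 1) → ℂ, x ≠ 0 → x 1 = x 0 →
        (∀ i : Fin (n + 1), 2 ≤ (i : ℕ) → x i = 0) →
        Tendsto (fun t => Real.log (Real.sqrt (hodgeNormSq n κ t x)) / t) atTop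
          (nhds (-(1 / Real.sqrt (2 * κ))))) :=
  uniformizing_lyapunov_spectrum_general n hn κ

end
end

section
/- Suppose an ℝ-irreducible local system W_ℝ underlying a polarized real VHS becomes reducible over ℂ, so W_ℝ ⊗ ℂ = V ⊕ V̄. Then every Lyapunov exponent of W_ℝ occurs with even multiplicity. -/
/-!
For `u ∈ V` the vector `u + σ u` is real, and since `V ∩ σ V = 0` and `E = V + σ V`, the map
`u ↦ u + σ u` is an `ℝ`-linear isomorphism from `V` onto the real form. On a finite-dimensional
space this injective map is bounded below, so `‖u‖` and `‖u + σ u‖` are comparable up to a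
constant; as `G_t` commutes with `σ` and preserves `V`, the same holds for `G_t u` and
`G_t (u + σ u)`, and `u` and `u + σ u` have the same Lyapunov exponents. Hence the map sends the
Oseledets subspace `U_λ` of `V` onto `W_λ`, and `dim_ℝ W_λ = dim_ℝ U_λ = 2 dim_ℂ U_λ`.
-/

open Filter Topology

lemma abs_log_sub_log_le_log {a b C : ℝ} (ha : 0 ≤ a) (hC : 1 ≤ C)
    (hab : a ≤ C * b) (hba : b ≤ C * a) : |Real.log b - Real.log a| ≤ Real.log C := by
  rcases ha.eq_or_lt with rfl | ha
  · obtain rfl : b = 0 := by nlinarith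
    simpa using Real.log_nonneg hC
  have hb : 0 < b := by nlinarith
  have hCpos : C ≠ 0 := by positivity
  have hb' : Real.log b ≤ Real.log C + Real.log a := by
    rw [← Real.log_mul hCpos ha.ne']; exact Real.log_le_log hb hba
  have ha' : Real.log a ≤ Real.log C + Real.log b := by
    rw [← Real.log_mul hCpos hb.ne']; exact Real.log_le_log ha hab
  rw [abs_sub_le_iff]
  constructor <;> linarith

lemma tendsto_div_iff_of_abs_sub_le {f g : ℝ → ℝ} {M lam : ℝ} {l : Filter ℝ}
    (hl : Tendsto (fun t : ℝ => t⁻¹) l (𝓝 0)) (h : ∀ t, |g t - f t| ≤ M) :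
    Tendsto (fun t => f t / t) l (𝓝 lam) ↔ Tendsto (fun t => g t / t) l (𝓝 lam) := by
  suffices key : ∀ f₁ g₁ : ℝ → ℝ, (∀ t, |g₁ t - f₁ t| ≤ M) →
      Tendsto (fun t => f₁ t / t) l (𝓝 lam) → Tendsto (fun t => g₁ t / t) l (𝓝 lam) from
    ⟨key f g h, key g f fun t => abs_sub_comm (f t) (g t) ▸ h t⟩
  intro f₁ g₁ h₁ hf
  have hdiff : Tendsto (fun t => t⁻¹ * (g₁ t - f₁ t)) l (𝓝 0) :=
    hl.zero_mul_isBoundedUnder_le (isBoundedUnder_of ⟨M, fun t => h₁ t⟩)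
  simpa only [add_zero] using (hf.add hdiff).congr fun t => by ring

section LyapunovExponent

variable {F : Type*} [Norm F]

def HasLyapunovExponent (c : ℝ → F) (lam : ℝ) : Prop :=
  Tendsto (fun t => Real.log ‖c t‖ / t) atTop (𝓝 lam) ∧
    Tendsto (fun t => Real.log ‖c t‖ / t) atBot (𝓝 lam)

lemma hasLyapunovExponent_congr_of_abs_log_norm_sub_le {c c' : ℝ → F} {M : ℝ} (lam : ℝ)
    (h : ∀ t, |Real.log ‖c' t‖ - Real.log ‖c t‖| ≤ M) :
    HasLyapunovExponent c lam ↔ HasLyapunovExponent c' lam :=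
  and_congr (tendsto_div_iff_of_abs_sub_le tendsto_inv_atTop_zero h)
    (tendsto_div_iff_of_abs_sub_le tendsto_inv_atBot_zero h)

end LyapunovExponent

section RealForm

variable {E : Type*} [AddCommGroup E] [Module ℂ E] {σ : E →ₗ[ℝ] E} {V : Submodule ℂ E}

variable (σ) in
noncomputable def sumWithConj (U : Submodule ℂ E) : U →ₗ[ℝ] E :=
  (LinearMap.id + σ) ∘ₗ U.subtype.restrictScalars ℝ

@[simp]
lemma sumWithConj_apply (U : Submodule ℂ E) (u : U) : sumWithConj σ U u = u + σ u := rfl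

lemma add_conj_eq_zero_iff (hVcap : ∀ v ∈ V, σ v ∈ V → v = 0) {v : E} (hv : v ∈ V) :
    v + σ v = 0 ↔ v = 0 := by
  refine ⟨fun h => hVcap v hv ?_, fun h => by simp [h]⟩
  rw [eq_neg_of_add_eq_zero_right h]
  exact V.neg_mem hv

lemma sumWithConj_injective (hVcap : ∀ v ∈ V, σ v ∈ V → v = 0) {U : Submodule ℂ E} (hUV : U ≤ V) :
    Function.Injective (sumWithConj σ U) := by
  refine (injective_iff_map_eq_zero _).mpr fun u hu => ?_
  exact Subtype.ext ((add_conj_eq_zero_iff hVcap (hUV u.2)).mp hu)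

lemma eq_of_conj_add_conj_eq (hσσ : ∀ v, σ (σ v) = v) (hVcap : ∀ v ∈ V, σ v ∈ V → v = 0)
    {v v' : E} (hv : v ∈ V) (hv' : v' ∈ V) (h : σ (v + σ v') = v + σ v') : v = v' := by
  rw [map_add, hσσ] at h
  have hfix : σ (v - v') = v - v' := by
    rw [map_sub]; exact sub_eq_sub_iff_add_eq_add.mpr h
  have hmem : v - v' ∈ V := V.sub_mem hv hv'
  exact sub_eq_zero.mp (hVcap _ hmem (by rwa [hfix]))

lemma range_sumWithConj_eq (hσσ : ∀ v, σ (σ v) = v)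
    (hdecomp : ∀ w : E, ∃ v v' : E, v ∈ V ∧ v' ∈ V ∧ w = v + σ v')
    (hVcap : ∀ v ∈ V, σ v ∈ V → v = 0) {P : E → Prop} (hP : ∀ v ∈ V, P (v + σ v) ↔ P v)
    {U : Submodule ℂ E} (hU : ∀ v, v ∈ U ↔ v ∈ V ∧ P v)
    {W : Submodule ℝ E} (hW : ∀ w, w ∈ W ↔ σ w = w ∧ P w) :
    LinearMap.range (sumWithConj σ U) = W := by
  ext w
  constructor
  · rintro ⟨u, rfl⟩
    obtain ⟨huV, hPu⟩ := (hU u).mp u.2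
    refine (hW _).mpr ⟨?_, (hP u huV).mpr hPu⟩
    rw [sumWithConj_apply, map_add, hσσ, add_comm]
  · intro hw
    obtain ⟨hσw, hPw⟩ := (hW w).mp hw
    obtain ⟨v, v', hv, hv', rfl⟩ := hdecomp w
    obtain rfl := eq_of_conj_add_conj_eq hσσ hVcap hv hv' hσw
    exact ⟨⟨v, (hU v).mpr ⟨hv, (hP v hv).mp hPw⟩⟩, rfl⟩

end RealForm

section HodgeNorm

variable {E : Type*} [NormedAddCommGroup E] [NormedSpace ℂ E] [FiniteDimensional ℂ E]
  {σ : E →ₗ[ℝ] E} {V : Submodule ℂ E}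

lemma exists_norm_le_mul_norm_add_conj (hVcap : ∀ v ∈ V, σ v ∈ V → v = 0) :
    ∃ C : ℝ, ∀ v ∈ V, ‖v‖ ≤ C * ‖v + σ v‖ := by
  obtain ⟨K, -, hK⟩ := (sumWithConj σ V).exists_antilipschitzWith
    (LinearMap.ker_eq_bot.mpr (sumWithConj_injective hVcap le_rfl))
  exact ⟨K, fun v hv => hK.le_mul_norm (map_zero _) ⟨v, hv⟩⟩

lemma exists_abs_log_norm_add_conj_sub_le (hσnorm : ∀ v, ‖σ v‖ = ‖v‖)
    (hVcap : ∀ v ∈ V, σ v ∈ V → v = 0) :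
    ∃ M : ℝ, ∀ v ∈ V, |Real.log ‖v + σ v‖ - Real.log ‖v‖| ≤ M := by
  obtain ⟨C, hC⟩ := exists_norm_le_mul_norm_add_conj hVcap
  refine ⟨Real.log (max C 2), fun v hv => abs_log_sub_log_le_log (norm_nonneg v)
    (by simp) ((hC v hv).trans ?_) ?_⟩
  · gcongr; exact le_max_left _ _
  · calc ‖v + σ v‖ ≤ ‖v‖ + ‖σ v‖ := norm_add_le _ _
      _ = 2 * ‖v‖ := by rw [hσnorm]; ring
      _ ≤ max C 2 * ‖v‖ := by gcongr; exact le_max_right _ _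

end HodgeNorm

theorem duplication_of_exponents_general
    {E : Type*} [NormedAddCommGroup E] [NormedSpace ℂ E] [FiniteDimensional ℂ E]
    (σ : E →ₗ[ℝ] E)
    (hσσ : ∀ v, σ (σ v) = v)
    (hσnorm : ∀ v, ‖σ v‖ = ‖v‖)
    (G : ℝ → E →ₗ[ℂ] E)
    (hGσ : ∀ t v, G t (σ v) = σ (G t v))
    (V : Submodule ℂ E)
    (hVinv : ∀ t : ℝ, ∀ v ∈ V, G t v ∈ V)
    (hdecomp : ∀ w : E, ∃ v v' : E, v ∈ V ∧ v' ∈ V ∧ w = v + σ v')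
    (hVcap : ∀ v ∈ V, σ v ∈ V → v = 0)
    (lam : ℝ)
    (Wlam : Submodule ℝ E)   -- the Oseledets subspace of the real form `W_ℝ` for `λ`
    (hW : ∀ w : E, w ∈ Wlam ↔ (σ w = w ∧ (w = 0 ∨
        (Tendsto (fun t => Real.log ‖G t w‖ / t) atTop (nhds lam) ∧
         Tendsto (fun t => Real.log ‖G t w‖ / t) atBot (nhds lam)))))
    (Ulam : Submodule ℂ E)   -- the Oseledets subspace of `V` for `λ`
    (hU : ∀ v : E, v ∈ Ulam ↔ (v ∈ V ∧ (v = 0 ∨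
        (Tendsto (fun t => Real.log ‖G t v‖ / t) atTop (nhds lam) ∧
         Tendsto (fun t => Real.log ‖G t v‖ / t) atBot (nhds lam))))) :
    Even (Module.finrank ℝ Wlam) := by
  obtain ⟨M, hM⟩ := exists_abs_log_norm_add_conj_sub_le hσnorm hVcap
  have hgrowth : ∀ v ∈ V, (v + σ v = 0 ∨ HasLyapunovExponent (fun t => G t (v + σ v)) lam) ↔
      (v = 0 ∨ HasLyapunovExponent (fun t => G t v) lam) := fun v hv =>
    or_congr (add_conj_eq_zero_iff hVcap hv)
      (hasLyapunovExponent_congr_of_abs_log_norm_sub_le lam fun t => by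
        rw [abs_sub_comm, map_add, hGσ]; exact hM _ (hVinv t v hv))
  have hUV : Ulam ≤ V := fun v hv => ((hU v).mp hv).1
  rw [← range_sumWithConj_eq hσσ hdecomp hVcap hgrowth hU hW,
    LinearMap.finrank_range_of_inj (sumWithConj_injective hVcap hUV), finrank_real_of_complex]
  exact even_two_mul _

/-- **Duplication of Lyapunov exponents.**
Suppose the ℝ-irreducible local system `W_ℝ` underlying a polarized real VHS
becomes reducible over ℂ: `W_ℝ ⊗ ℂ = V ⊕ V̄`. Abstractly: `E = W_ℝ ⊗ ℂ` is a
complex normed space with an antilinear conjugation `σ` (whose fixed points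
form the real form `W_ℝ`), the Hodge norm satisfies `‖σv‖ = ‖v‖`, the
ℂ-linear parallel-transport cocycle `G_t` satisfies `G_t(σv) = σ(G_t v)`, and
`E = V ⊕ σ(V)` for a `G`-invariant complex subspace `V`. Then for every `λ`
the Oseledets subspace `W_λ` of the real form (the real multiplicity of the
exponent `λ` of `W_ℝ`) has even dimension: every Lyapunov exponent of `W_ℝ`
occurs with even multiplicity. -/
theorem duplication_of_exponents
    {E : Type*} [NormedAddCommGroup E] [NormedSpace ℂ E] [FiniteDimensional ℂ E]
    (σ : E →ₗ[ℝ] E)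
    (hσσ : ∀ v, σ (σ v) = v)
    (hσsmul : ∀ (c : ℂ) (v : E), σ (c • v) = (starRingEnd ℂ) c • σ v)
    (hσnorm : ∀ v, ‖σ v‖ = ‖v‖)
    (G : ℝ → E →ₗ[ℂ] E)
    (hGσ : ∀ t v, G t (σ v) = σ (G t v))
    (V : Submodule ℂ E)
    (hVinv : ∀ t : ℝ, ∀ v ∈ V, G t v ∈ V)
    (hdecomp : ∀ w : E, ∃ v v' : E, v ∈ V ∧ v' ∈ V ∧ w = v + σ v')
    (hVcap : ∀ v ∈ V, σ v ∈ V → v = 0)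
    (lam : ℝ)
    (Wlam : Submodule ℝ E)   -- the Oseledets subspace of the real form `W_ℝ` for `λ`
    (hW : ∀ w : E, w ∈ Wlam ↔ (σ w = w ∧ (w = 0 ∨
        (Tendsto (fun t => Real.log ‖G t w‖ / t) atTop (nhds lam) ∧
         Tendsto (fun t => Real.log ‖G t w‖ / t) atBot (nhds lam)))))
    (Ulam : Submodule ℂ E)   -- the Oseledets subspace of `V` for `λ`
    (hU : ∀ v : E, v ∈ Ulam ↔ (v ∈ V ∧ (v = 0 ∨
        (Tendsto (fun t => Real.log ‖G t v‖ / t) atTop (nhds lam) ∧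
         Tendsto (fun t => Real.log ‖G t v‖ / t) atBot (nhds lam))))) :
    Even (Module.finrank ℝ Wlam) :=
  duplication_of_exponents_general σ hσσ hσnorm G hGσ V hVinv hdecomp hVcap lam Wlam hW Ulam hU
end
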